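/- arXiv:1302.2248 — 3 statements merged into one kernel-verified Lean document; each statement's English description precedes it below -/
import Mathlib

section
/- For all integers t ≥ 2 and n ≥ 1, the maximum number of edges of a K_{t+1}-free graph on n vertices equals the number of edges of the Turán graph T_{n,t}, the complete balanced t-partite graph on n vertices. -/
open Filter Topology

attribute [local instance] Classical.propDecidable

/-- `G` contains a copy of `F`. -/
def Contains {α β : Type*} (F : SimpleGraph α) (G : SimpleGraph β) : Prop :=
  ∃ f : α ↪ β, ∀ a b, F.Adj a b → G.Adj (f a) (f b)

/-- Number of edges of a graph. -/
noncomputable def ecard {V : Type*} (G : SimpleGraph V) : ℕ := G.edgeSet.ncard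

/-- The extremal number `ex_n(F)`. -/
noncomputable def exNum (n : ℕ) {α : Type*} (F : SimpleGraph α) : ℕ :=
  sSup {m | ∃ H : SimpleGraph (Fin n), ¬ Contains F H ∧ ecard H = m}

/-- The generalized extremal number `ex_G(F)`. -/
noncomputable def exRel {V α : Type*} (G : SimpleGraph V) (F : SimpleGraph α) : ℕ :=
  sSup {m | ∃ H ≤ G, ¬ Contains F H ∧ ecard H = m}

/-- maximum size of a `t`-colorable subgraph of `G` -/
noncomputable def colRel {V : Type*} (G : SimpleGraph V) (t : ℕ) : ℕ :=
  sSup {m | ∃ H ≤ G, H.Colorable t ∧ ecard H = m}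

/-- probability that `G(n,p)` satisfies `P` -/
noncomputable def gnpProb (n : ℕ) (p : ℝ) (P : SimpleGraph (Fin n) → Prop) : ℝ :=
  ∑ᶠ G : SimpleGraph (Fin n),
    if P G then p ^ ecard G * (1 - p) ^ (n.choose 2 - ecard G) else 0

/-- number of labeled copies of `F` in `G` -/
noncomputable def numCopies {α V : Type*} (F : SimpleGraph α) (G : SimpleGraph V) : ℕ :=
  Set.ncard {f : α ↪ V | ∀ a b, F.Adj a b → G.Adj (f a) (f b)}

/-- expected number of labeled copies of `F` in `G(n,p)` -/
noncomputable def gnpExpCopies (n : ℕ) (p : ℝ) {α : Type*} (F : SimpleGraph α) : ℝ :=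
  ∑ᶠ G : SimpleGraph (Fin n),
    p ^ ecard G * (1 - p) ^ (n.choose 2 - ecard G) * numCopies F G

noncomputable def d2 {V : Type*} {F : SimpleGraph V} (H : F.Subgraph) : ℝ :=
  if 2 < H.verts.ncard then ((H.edgeSet.ncard : ℝ) - 1) / ((H.verts.ncard : ℝ) - 2)
  else 1/2

/-- the 2-density `m₂(F)` -/
noncomputable def m2 {V : Type*} (F : SimpleGraph V) : ℝ :=
  sSup {x | ∃ H : F.Subgraph, H.edgeSet.Nonempty ∧ d2 H = x}

/-- the asymmetric 2-density `m₂(F₁,F₂)` -/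
noncomputable def m2Asym {V W : Type*} (F₁ : SimpleGraph V) (F₂ : SimpleGraph W) : ℝ :=
  sSup {x | ∃ H : F₂.Subgraph, H.edgeSet.Nonempty ∧
    x = (H.edgeSet.ncard : ℝ) / ((H.verts.ncard : ℝ) - 2 + 1 / m2 F₁)}

/-- size of the cut given by a colouring `c` -/
noncomputable def cutSize {V : Type*} (G : SimpleGraph V) {t : ℕ} (c : V → Fin t) : ℕ :=
  Set.ncard {e ∈ G.edgeSet | ¬ (e.map c).IsDiag}

/-- a colouring is balanced if all colour classes have sizes differing by at most one -/
def BalancedPartition {V : Type*} [Fintype V] {t : ℕ} (c : V → Fin t) : Prop :=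
  ∀ i j : Fin t, (Finset.univ.filter fun v => c v = i).card ≤
    (Finset.univ.filter fun v => c v = j).card + 1

open Finset SimpleGraph

lemma contains_iff_isContained {α β : Type*} (F : SimpleGraph α) (G : SimpleGraph β) :
    Contains F G ↔ F ⊑ G :=
  ⟨fun ⟨f, hf⟩ ↦ ⟨⟨⟨f, hf _ _⟩, f.injective⟩⟩,
    fun ⟨f⟩ ↦ ⟨f.toEmbedding, fun _ _ ↦ f.toHom.map_adj⟩⟩

lemma ecard_eq_card_edgeFinset {V : Type*} (G : SimpleGraph V) [Fintype G.edgeSet] :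
    ecard G = #G.edgeFinset :=
  Set.ncard_eq_toFinset_card' _

theorem exNum_eq_extremalNumber (n : ℕ) {α : Type*} (F : SimpleGraph α) :
    exNum n F = extremalNumber n F := by
  unfold exNum
  have bdd : extremalNumber n F ∈ upperBounds
      {m | ∃ H : SimpleGraph (Fin n), ¬ Contains F H ∧ ecard H = m} := by
    rintro _ ⟨H, hH, rfl⟩
    rw [ecard_eq_card_edgeFinset]
    simpa using card_edgeFinset_le_extremalNumber ((contains_iff_isContained F H).not.1 hH)
  -- `csSup_le'` needs no nonemptiness: if every graph on `Fin n` contains `F`, both sides are `0`.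
  refine le_antisymm (csSup_le' bdd) ?_
  simpa using (extremalNumber_le_iff (V := Fin n) F _).2 fun G _ hG ↦ le_csSup ⟨_, bdd⟩
    ⟨G, (contains_iff_isContained F G).not.2 hG, ecard_eq_card_edgeFinset G⟩

theorem stmt0_general (t n : ℕ) (ht : 2 ≤ t) :
    exNum n (SimpleGraph.completeGraph (Fin (t + 1))) = ecard (SimpleGraph.turanGraph n t) := by
  have : Nontrivial (Fin (t + 1)) := Fin.nontrivial_iff_two_le.2 (by omega)
  rw [exNum_eq_extremalNumber, completeGraph, extremalNumber_top, ecard_eq_card_edgeFinset,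
    Fintype.card_fin, Nat.add_sub_cancel]

/-- Turán's theorem: extremal number of `K_{t+1}` equals the edge count of the Turán graph. -/
theorem stmt0 (t n : ℕ) (ht : 2 ≤ t) (hn : 1 ≤ n) :
    exNum n (SimpleGraph.completeGraph (Fin (t + 1))) = ecard (SimpleGraph.turanGraph n t) :=
  stmt0_general t n ht
end

section
/- For every ε > 0 there exist δ > 0 and n₀ such that every graph G on n ≥ n₀ vertices containing at most δn³ triangles can be made triangle-free by deleting at most εn² edges. -/
open Filter Topology

attribute [local instance] Classical.propDecidable

namespace SimpleGraph

open scoped Finset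

variable {V W : Type*}

theorem contains_iff_isContained (F : SimpleGraph V) (G : SimpleGraph W) :
    Contains F G ↔ F ⊑ G :=
  isContained_iff_exists_le_comap.symm

theorem not_contains_completeGraph_iff_cliqueFree (G : SimpleGraph V) (n : ℕ) :
    ¬ Contains (completeGraph (Fin n)) G ↔ G.CliqueFree n := by
  rw [contains_iff_isContained, ← not_cliqueFree_iff_top_isContained, not_not]

theorem ncard_setOf_isNClique [Fintype V] [DecidableEq V] (G : SimpleGraph V) [DecidableRel G.Adj]
    (n : ℕ) :
    {s : Finset V | G.IsNClique n s}.ncard = #(G.cliqueFinset n) := by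
  rw [← Set.ncard_coe_finset, coe_cliqueFinset]
  rfl

theorem exists_cliqueFree_three_deleteEdges_of_card_cliqueFinset_lt [Fintype V] [DecidableEq V]
    {G : SimpleGraph V} [DecidableRel G.Adj] {ε : ℝ}
    (hG : #(G.cliqueFinset 3) < triangleRemovalBound ε * Fintype.card V ^ 3) :
    ∃ s ⊆ G.edgeFinset, (#s : ℝ) < ε * (Fintype.card V ^ 2 : ℕ) ∧
      (G.deleteEdges s).CliqueFree 3 := by
  by_contra! h
  exact hG.not_ge (FarFromTriangleFree.le_card_cliqueFinset fun s hs hfree ↦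
    not_lt.1 fun hlt ↦ h s hs hlt hfree)

end SimpleGraph

open Finset SimpleGraph in
/-- Ruzsa–Szemerédi triangle removal lemma. -/
theorem stmt17 (ε : ℝ) (hε : 0 < ε) :
    ∃ δ : ℝ, 0 < δ ∧ ∃ n₀ : ℕ, ∀ n ≥ n₀, ∀ G : SimpleGraph (Fin n),
      (Set.ncard {s : Finset (Fin n) | G.IsNClique 3 s} : ℝ) ≤ δ * (n : ℝ) ^ 3 →
      ∃ S : Set (Sym2 (Fin n)), S ⊆ G.edgeSet ∧ (S.ncard : ℝ) ≤ ε * (n : ℝ) ^ 2 ∧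
        ¬ Contains (SimpleGraph.completeGraph (Fin 3)) (G.deleteEdges S) := by
  -- halving the bound makes the hypothesis strict once `n ≥ 1`, as Mathlib's removal lemma needs
  refine ⟨triangleRemovalBound ε / 2, by positivity, 1, fun n hn₀ G hG ↦ ?_⟩
  have hn : (0 : ℝ) < n ^ 3 := by
    have : (0 : ℝ) < n := by exact_mod_cast hn₀
    positivity
  have hfew : #(G.cliqueFinset 3) < triangleRemovalBound ε * Fintype.card (Fin n) ^ 3 := by
    have := triangleRemovalBound_pos hε
    rw [ncard_setOf_isNClique] at hG
    rw [Fintype.card_fin]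
    nlinarith
  obtain ⟨s, hsG, hs, hfree⟩ := exists_cliqueFree_three_deleteEdges_of_card_cliqueFinset_lt hfew
  refine ⟨s, (coe_subset.2 hsG).trans_eq G.coe_edgeFinset, ?_,
    (not_contains_completeGraph_iff_cliqueFree _ 3).2 hfree⟩
  rw [Set.ncard_coe_finset]
  simpa using hs.le
end

section
/- For every graph F with vertex set [ℓ] and every d > 0, there exist ε > 0 and m₀ such that: if H is an ℓ-partite graph with parts V₁, …, V_ℓ of equal size m ≥ m₀ such that for every edge {i,j} of F the pair (V_i, V_j) is ε-regular in H with density at least d, then there exists a graph homomorphism φ: F → H with φ(i) ∈ V_i for all i (a partite copy of F). -/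
open Filter Topology

attribute [local instance] Classical.propDecidable

/-!
The vertices of `F` are embedded one at a time. For every vertex `j` not yet embedded we keep its
candidate set: the vertices of `V j` adjacent to the images of all embedded neighbours of `j`.
By `ε`-uniformity, for any `C ⊆ V j` with `|C| ≥ ε |V j|`, all but `ε |V a|` vertices of `V a`
have at least `(d - ε) |C|` neighbours in `C`. Let `δ ≤ d - ε`. While every candidate set keeps
a fraction `δ ^ ℓ ≥ (ℓ + 1) ε` of its part, some candidate for the next vertex `a` is typical
towards all unembedded neighbours of `a`, and embedding it shrinks each of their candidate sets
by a factor of at most `δ`.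
-/

open Finset

namespace SimpleGraph

section Uniform

variable {α : Type*} {G : SimpleGraph α} [DecidableRel G.Adj]

lemma card_interedges_le_sum_card_filter_adj (s t : Finset α) :
    #(G.interedges s t) ≤ ∑ x ∈ s, #{y ∈ t | G.Adj x y} := by
  rw [interedges, Rel.interedges_eq_biUnion]
  exact card_biUnion_le.trans_eq (by simp only [card_map])

lemma IsUniform.card_filter_card_adj_lt_le {ε : ℝ} {s t C : Finset α}
    (hst : G.IsUniform ε s t) (hCt : C ⊆ t) (hC : #t * ε ≤ #C) :
    (#{x ∈ s | #{y ∈ C | G.Adj x y} < (G.edgeDensity s t - ε) * #C} : ℝ) ≤ #s * ε := by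
  set B := {x ∈ s | #{y ∈ C | G.Adj x y} < (G.edgeDensity s t - ε) * #C}
  by_contra! hB
  obtain ⟨x, hx⟩ : B.Nonempty := by
    rw [← card_pos]
    exact_mod_cast (mul_nonneg (Nat.cast_nonneg _) hst.pos.le).trans_lt hB
  have hgap : 0 < (G.edgeDensity s t - ε) * #C := (Nat.cast_nonneg _).trans_lt (mem_filter.1 hx).2
  have hCpos : (0 : ℝ) < #C := (Nat.cast_nonneg _).lt_of_ne fun h ↦ by simp [← h] at hgap
  have hBpos : (0 : ℝ) < #B := by exact_mod_cast card_pos.2 ⟨x, hx⟩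
  have hsum : (#(G.interedges B C) : ℝ) < #B * ((G.edgeDensity s t - ε) * #C) := calc
    (#(G.interedges B C) : ℝ) ≤ ∑ x ∈ B, (#{y ∈ C | G.Adj x y} : ℝ) := by
      exact_mod_cast card_interedges_le_sum_card_filter_adj B C
    _ < ∑ _x ∈ B, (G.edgeDensity s t - ε) * #C :=
      sum_lt_sum_of_nonempty ⟨x, hx⟩ fun y hy ↦ (mem_filter.1 hy).2
    _ = #B * ((G.edgeDensity s t - ε) * #C) := by rw [sum_const, nsmul_eq_mul]
  have hlow : (G.edgeDensity B C : ℝ) < G.edgeDensity s t - ε := by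
    rw [edgeDensity_def]
    push_cast
    rw [div_lt_iff₀ (by positivity)]
    linarith
  have := hst (filter_subset _ s) hCt hB.le hC
  rw [abs_sub_lt_iff] at this
  linarith

end Uniform

variable {ι α : Type*} {F : SimpleGraph ι} {G : SimpleGraph α} [DecidableRel G.Adj]
  {V : ι → Finset α} {δ ε : ℝ} {S : Finset ι} {φ : ι → α}

variable (F G V) in
noncomputable def extensionCandidates (S : Finset ι) (φ : ι → α) (j : ι) : Finset α :=
  {y ∈ V j | ∀ i ∈ S, F.Adj i j → G.Adj (φ i) y}

variable (F G V) in
structure IsLargePartialHom (δ : ℝ) (S : Finset ι) (φ : ι → α) : Prop where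
  mem : ∀ i ∈ S, φ i ∈ V i
  adj : ∀ i ∈ S, ∀ j ∈ S, F.Adj i j → G.Adj (φ i) (φ j)
  card_extensionCandidates : ∀ j ∉ S,
    δ ^ #{i ∈ S | F.Adj i j} * #(V j) ≤ #(extensionCandidates F G V S φ j)

lemma extensionCandidates_subset (S : Finset ι) (φ : ι → α) (j : ι) :
    extensionCandidates F G V S φ j ⊆ V j :=
  filter_subset _ _

lemma extensionCandidates_empty (φ : ι → α) (j : ι) :
    extensionCandidates F G V ∅ φ j = V j := by
  simp [extensionCandidates]

lemma extensionCandidates_insert_update {a : ι} (ha : a ∉ S) (φ : ι → α) (x : α) (j : ι) :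
    extensionCandidates F G V (insert a S) (Function.update φ a x) j =
      {y ∈ extensionCandidates F G V S φ j | F.Adj a j → G.Adj x y} := by
  ext y
  have hφ : ∀ i ∈ S, Function.update φ a x i = φ i := fun i hi ↦
    Function.update_of_ne (ne_of_mem_of_not_mem hi ha) _ _
  simp only [extensionCandidates, mem_filter, forall_mem_insert, Function.update_self]
  constructor
  · rintro ⟨hy, hxy, hS⟩
    exact ⟨⟨hy, fun i hi ↦ hφ i hi ▸ hS i hi⟩, hxy⟩
  · rintro ⟨⟨hy, hS⟩, hxy⟩
    exact ⟨hy, hxy, fun i hi ↦ (hφ i hi).symm ▸ hS i hi⟩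

lemma isLargePartialHom_empty : IsLargePartialHom F G V δ ∅ φ where
  mem := by simp
  adj := by simp
  card_extensionCandidates j _ := by simp [extensionCandidates_empty]

lemma IsLargePartialHom.extend {a : ι} {x : α} (h : IsLargePartialHom F G V δ S φ) (hδ : 0 ≤ δ)
    (ha : a ∉ S) (hx : x ∈ extensionCandidates F G V S φ a)
    (hgood : ∀ j ∉ insert a S, F.Adj a j →
      δ * #(extensionCandidates F G V S φ j) ≤
        #{y ∈ extensionCandidates F G V S φ j | G.Adj x y}) :
    IsLargePartialHom F G V δ (insert a S) (Function.update φ a x) := by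
  have hφ : ∀ i ∈ S, Function.update φ a x i = φ i := fun i hi ↦
    Function.update_of_ne (ne_of_mem_of_not_mem hi ha) _ _
  have hxS : ∀ i ∈ S, F.Adj i a → G.Adj (φ i) x := (mem_filter.1 hx).2
  refine ⟨?_, ?_, ?_⟩
  · simp only [forall_mem_insert, Function.update_self]
    exact ⟨extensionCandidates_subset S φ a hx, fun i hi ↦ hφ i hi ▸ h.mem i hi⟩
  · simp only [forall_mem_insert, Function.update_self]
    refine ⟨⟨fun haa ↦ absurd haa (F.loopless.irrefl a), fun j hj haj ↦ ?_⟩, fun i hi ↦ ⟨?_, ?_⟩⟩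
    · rw [hφ j hj]; exact (hxS j hj haj.symm).symm
    · intro hia; rw [hφ i hi]; exact hxS i hi hia
    · intro j hj hij; rw [hφ i hi, hφ j hj]; exact h.adj i hi j hj hij
  · intro j hj
    have hcard := h.card_extensionCandidates j fun h ↦ hj (mem_insert_of_mem h)
    rw [extensionCandidates_insert_update ha, filter_insert]
    by_cases haj : F.Adj a j
    · rw [if_pos haj, card_insert_of_notMem (fun h ↦ ha (mem_filter.1 h).1), pow_succ]
      simp only [haj, true_imp_iff]
      calc δ ^ #{i ∈ S | F.Adj i j} * δ * #(V j)
          = δ * (δ ^ #{i ∈ S | F.Adj i j} * #(V j)) := by ring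
        _ ≤ δ * #(extensionCandidates F G V S φ j) := by gcongr
        _ ≤ _ := hgood j hj haj
    · rw [if_neg haj]
      simpa only [haj, false_imp_iff, filter_true] using hcard

variable [Fintype ι]

lemma IsLargePartialHom.pow_card_mul_card_le (h : IsLargePartialHom F G V δ S φ) (hδ₀ : 0 ≤ δ)
    (hδ₁ : δ ≤ 1) {j : ι} (hj : j ∉ S) :
    δ ^ Fintype.card ι * #(V j) ≤ #(extensionCandidates F G V S φ j) :=
  calc δ ^ Fintype.card ι * #(V j) ≤ δ ^ #{i ∈ S | F.Adj i j} * #(V j) := by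
        gcongr ?_ * _
        exact pow_le_pow_of_le_one hδ₀ hδ₁ (card_le_univ _)
    _ ≤ _ := h.card_extensionCandidates j hj

lemma IsLargePartialHom.exists_extension (h : IsLargePartialHom F G V δ S φ) (hε : 0 < ε)
    (hδ₀ : 0 ≤ δ) (hδ₁ : δ ≤ 1) (hεδ : (Fintype.card ι + 1) * ε ≤ δ ^ Fintype.card ι)
    (hreg : ∀ i j, F.Adj i j → G.IsUniform ε (V i) (V j) ∧ δ + ε ≤ G.edgeDensity (V i) (V j))
    {a : ι} (ha : a ∉ S) (hVa : (V a).Nonempty) :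
    ∃ x ∈ extensionCandidates F G V S φ a, ∀ j ∉ insert a S, F.Adj a j →
      δ * #(extensionCandidates F G V S φ j) ≤
        #{y ∈ extensionCandidates F G V S φ j | G.Adj x y} := by
  set C := extensionCandidates F G V S φ
  set N : Finset ι := {j | F.Adj a j ∧ j ∉ insert a S}
  set B : ι → Finset α := fun j ↦
    {x ∈ V a | #{y ∈ C j | G.Adj x y} < (G.edgeDensity (V a) (V j) - ε) * #(C j)}
  have hbad : ∀ j ∈ N, (#(B j) : ℝ) ≤ #(V a) * ε := by
    intro j hj
    obtain ⟨haj, hjS⟩ := (mem_filter.1 hj).2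
    refine (hreg a j haj).1.card_filter_card_adj_lt_le (extensionCandidates_subset S φ j) ?_
    have := h.pow_card_mul_card_le hδ₀ hδ₁ (fun h ↦ hjS (mem_insert_of_mem h))
    nlinarith [(Nat.cast_nonneg (α := ℝ) (Fintype.card ι)), (Nat.cast_nonneg (α := ℝ) #(V j))]
  have hVa_pos : (0 : ℝ) < #(V a) := by exact_mod_cast hVa.card_pos
  have hlt : (#(N.biUnion B) : ℝ) < #(C a) := calc
    (#(N.biUnion B) : ℝ) ≤ ∑ j ∈ N, (#(B j) : ℝ) := by exact_mod_cast card_biUnion_le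
    _ ≤ ∑ _j ∈ N, (#(V a) * ε) := sum_le_sum hbad
    _ = #N * (#(V a) * ε) := by rw [sum_const, nsmul_eq_mul]
    _ ≤ Fintype.card ι * (#(V a) * ε) := by gcongr; exact_mod_cast card_le_univ N
    _ < (Fintype.card ι + 1) * ε * #(V a) := by nlinarith [mul_pos hε hVa_pos]
    _ ≤ δ ^ Fintype.card ι * #(V a) := by gcongr
    _ ≤ #(C a) := h.pow_card_mul_card_le hδ₀ hδ₁ ha
  obtain ⟨x, hxC, hxB⟩ := exists_mem_notMem_of_card_lt_card (by exact_mod_cast hlt)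
  refine ⟨x, hxC, fun j hj haj ↦ ?_⟩
  have hxBj : x ∉ B j := fun hx ↦ hxB (mem_biUnion.2 ⟨j, mem_filter.2 ⟨mem_univ j, haj, hj⟩, hx⟩)
  simp only [B, mem_filter, not_and, not_lt] at hxBj
  calc δ * #(C j) ≤ (G.edgeDensity (V a) (V j) - ε) * #(C j) := by
        gcongr
        linarith [(hreg a j haj).2]
    _ ≤ _ := hxBj (extensionCandidates_subset S φ a hxC)

theorem exists_partite_hom_of_isUniform (hV : ∀ i, (V i).Nonempty) (hε : 0 < ε) (hδ₀ : 0 ≤ δ)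
    (hδ₁ : δ ≤ 1) (hεδ : (Fintype.card ι + 1) * ε ≤ δ ^ Fintype.card ι)
    (hreg : ∀ i j, F.Adj i j → G.IsUniform ε (V i) (V j) ∧ δ + ε ≤ G.edgeDensity (V i) (V j)) :
    ∃ φ : ι → α, (∀ i, φ i ∈ V i) ∧ ∀ i j, F.Adj i j → G.Adj (φ i) (φ j) := by
  suffices ∀ S : Finset ι, ∃ φ, IsLargePartialHom F G V δ S φ by
    obtain ⟨φ, hφ⟩ := this univ
    exact ⟨φ, fun i ↦ hφ.mem i (mem_univ i), fun i j ↦ hφ.adj i (mem_univ i) j (mem_univ j)⟩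
  intro S
  induction S using Finset.induction_on with
  | empty => exact ⟨fun i ↦ (hV i).choose, isLargePartialHom_empty⟩
  | insert a S ha ih =>
    obtain ⟨φ, hφ⟩ := ih
    obtain ⟨x, hx, hgood⟩ := hφ.exists_extension hε hδ₀ hδ₁ hεδ hreg ha (hV a)
    exact ⟨_, hφ.extend hδ₀ ha hx hgood⟩

end SimpleGraph

/-- Embedding lemma for dense regular pairs. -/
theorem stmt19 (ℓ : ℕ) (F : SimpleGraph (Fin ℓ)) (d : ℝ) (hd : 0 < d) :
    ∃ ε : ℝ, 0 < ε ∧ ∃ m₀ : ℕ, ∀ m ≥ m₀, ∀ H : SimpleGraph (Fin ℓ × Fin m),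
      (∀ u v, H.Adj u v → u.1 ≠ v.1) →
      (∀ i j : Fin ℓ, F.Adj i j →
        H.IsUniform ε (Finset.univ.filter fun v => v.1 = i)
          (Finset.univ.filter fun v => v.1 = j) ∧
        d ≤ (H.edgeDensity (Finset.univ.filter fun v => v.1 = i)
          (Finset.univ.filter fun v => v.1 = j) : ℝ)) →
      ∃ φ : Fin ℓ → Fin ℓ × Fin m, (∀ i, (φ i).1 = i) ∧
        ∀ i j, F.Adj i j → H.Adj (φ i) (φ j) := by
  set δ : ℝ := min d 1 / 2 with hδ
  have hδ₀ : 0 < δ := by positivity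
  have hδ₁ : δ ≤ 1 := by linarith [hδ, min_le_right d 1]
  set ε : ℝ := δ ^ (ℓ + 1) / (ℓ + 1)
  have hεδ : (ℓ + 1) * ε ≤ δ ^ ℓ := by
    rw [mul_div_cancel₀ _ (by positivity)]
    exact pow_le_pow_of_le_one hδ₀.le hδ₁ ℓ.le_succ
  have hε_le : ε ≤ δ := div_le_of_le_mul₀ (by positivity) hδ₀.le <| calc
    δ ^ (ℓ + 1) ≤ δ ^ 1 := pow_le_pow_of_le_one hδ₀.le hδ₁ ℓ.succ_pos
    _ ≤ δ * (ℓ + 1) := by nlinarith [ℓ.cast_nonneg (α := ℝ)]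
  refine ⟨ε, by positivity, 1, fun m hm H _ hreg ↦ ?_⟩
  obtain ⟨φ, hφV, hφ⟩ := SimpleGraph.exists_partite_hom_of_isUniform (F := F) (G := H)
    (V := fun i ↦ univ.filter fun v ↦ v.1 = i) (fun i ↦ ⟨(i, ⟨0, hm⟩), by simp⟩) (by positivity)
    hδ₀.le hδ₁ (by simpa using hεδ)
    fun i j hij ↦ ⟨(hreg i j hij).1, by linarith [(hreg i j hij).2, min_le_left d 1, hδ]⟩
  exact ⟨φ, fun i ↦ (mem_filter.1 (hφV i)).2, hφ⟩
end
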